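/- Let ℓ > 0, Ω = ℝ² × (−ℓ, ℓ), and let f ∈ L^∞(Ω) and u ∈ H¹(Ω). Then ‖overline{f u} − overline{f} · overline{u}‖_{L²(ℝ²)} ≤ C ℓ ‖f‖_{L^∞(Ω)} ((1/(2ℓ)) ∫_{−ℓ}^{ℓ} ‖Du(·,x₃)‖²_{L²(ℝ²)} dx₃)^{1/2} for an absolute constant C > 0. -/

import Mathlib

open MeasureTheory Set Filter

lemma opt_helper (X ℓ I : ℝ) (hℓ : 0 < ℓ) (hI : 0 ≤ I)
    (h : ∀ c > 0, X ≤ c * ℓ + I / (2 * c)) : X ≤ Real.sqrt (2 * ℓ * I) := by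
  rcases eq_or_lt_of_le hI with hI0 | hI0
  · rw [← hI0, mul_zero, Real.sqrt_zero]
    have h2 : ∀ ε > 0, X ≤ ε := by
      intro ε hε
      have := h (ε / ℓ) (div_pos hε hℓ)
      rw [← hI0] at this
      simp at this
      calc X ≤ ε / ℓ * ℓ := this
        _ = ε := by field_simp
    exact le_of_forall_gt_imp_ge_of_dense fun ε hε => h2 ε hε
  · obtain ⟨r, hrpos, hr2⟩ : ∃ r : ℝ, 0 < r ∧ r ^ 2 = 2 * ℓ :=
      ⟨Real.sqrt (2 * ℓ), Real.sqrt_pos.2 (by linarith), Real.sq_sqrt (by linarith)⟩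
    obtain ⟨s, hspos, hs2⟩ : ∃ s : ℝ, 0 < s ∧ s ^ 2 = I :=
      ⟨Real.sqrt I, Real.sqrt_pos.2 hI0, Real.sq_sqrt hI⟩
    have hsq : Real.sqrt (2 * ℓ * I) = r * s := by
      rw [← hr2, ← hs2, ← mul_pow, Real.sqrt_sq (by positivity)]
    rw [hsq]
    have hc := h (s / r) (div_pos hspos hrpos)
    have key : s / r * ℓ + I / (2 * (s / r)) = r * s := by
      field_simp
      nlinarith [hr2, hs2]
    linarith [key ▸ hc]

lemma L1_le_sqrt_L2 {ℓ : ℝ} (hℓ : 0 < ℓ) {h : ℝ → ℝ}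
    (hsq : Integrable (fun t => h t ^ 2) (volume.restrict (Ioo (-ℓ) ℓ))) :
    ∫ t in Ioo (-ℓ) ℓ, |h t| ≤ Real.sqrt (2 * ℓ * ∫ t in Ioo (-ℓ) ℓ, h t ^ 2) := by
  set I := ∫ t in Ioo (-ℓ) ℓ, h t ^ 2 with hI
  have hInn : 0 ≤ I := integral_nonneg fun t => sq_nonneg _
  have hvol : (volume.restrict (Ioo (-ℓ) ℓ)) univ = ENNReal.ofReal (2 * ℓ) := by
    rw [Measure.restrict_apply_univ, Real.volume_Ioo]
    ring_nf
  refine opt_helper _ ℓ I hℓ hInn fun c hc => ?_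
  have hbound : ∀ t, |h t| ≤ c / 2 + h t ^ 2 / (2 * c) := by
    intro t
    have h0 : 0 ≤ (|h t| - c) ^ 2 := sq_nonneg _
    have : |h t| ^ 2 = h t ^ 2 := sq_abs _
    rw [div_add_div _ _ (by norm_num) (by positivity), le_div_iff₀ (by positivity)]
    nlinarith
  have hgint : Integrable (fun t => c / 2 + h t ^ 2 / (2 * c))
      (volume.restrict (Ioo (-ℓ) ℓ)) := by
    refine (integrable_const _).add ?_
    simpa [div_eq_mul_inv] using hsq.mul_const (2 * c)⁻¹
  calc ∫ t in Ioo (-ℓ) ℓ, |h t|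
      ≤ ∫ t in Ioo (-ℓ) ℓ, (c / 2 + h t ^ 2 / (2 * c)) := by
        refine integral_mono_of_nonneg (Filter.Eventually.of_forall fun t => abs_nonneg _)
          hgint (Filter.Eventually.of_forall hbound)
    _ = c / 2 * (2 * ℓ) + I / (2 * c) := by
        rw [integral_add (integrable_const _) (by
          simpa [div_eq_mul_inv] using hsq.mul_const (2 * c)⁻¹)]
        rw [integral_const, measureReal_def, hvol, ENNReal.toReal_ofReal (by linarith), smul_eq_mul]
        rw [integral_div]
        ring
    _ = c * ℓ + I / (2 * c) := by ring

lemma slice_bound {ℓ : ℝ} (hℓ : 0 < ℓ) (f v v' D : ℝ → ℝ) (Mf : ℝ) (hMf : 0 ≤ Mf)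
    (hfm : Measurable f) (hfb : ∀ t, |f t| ≤ Mf)
    (hv' : ∀ t, HasDerivAt v (v' t) t)
    (hv'm : AEStronglyMeasurable v' (volume.restrict (Ioo (-ℓ) ℓ)))
    (hDnn : ∀ t, 0 ≤ D t) (hDbd : ∀ t, v' t ^ 2 ≤ D t)
    (hv2 : Integrable (fun t => v t ^ 2) (volume.restrict (Ioo (-ℓ) ℓ)))
    (hD : Integrable D (volume.restrict (Ioo (-ℓ) ℓ))) :
    ((1/(2*ℓ)) * (∫ t in Ioo (-ℓ) ℓ, f t * v t)
      - ((1/(2*ℓ)) * ∫ t in Ioo (-ℓ) ℓ, f t) * ((1/(2*ℓ)) * ∫ t in Ioo (-ℓ) ℓ, v t)) ^ 2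
      ≤ 2 * ℓ * Mf ^ 2 * ∫ t in Ioo (-ℓ) ℓ, D t := by
  set ν := volume.restrict (Ioo (-ℓ) ℓ) with hν
  have hmeas : MeasurableSet (Ioo (-ℓ : ℝ) ℓ) := measurableSet_Ioo
  have hvolu : ν univ = ENNReal.ofReal (2 * ℓ) := by
    rw [hν, Measure.restrict_apply_univ, Real.volume_Ioo]; ring_nf
  have hvolr : (ν univ).toReal = 2 * ℓ := by
    rw [hvolu, ENNReal.toReal_ofReal (by linarith)]
  have hνfin : IsFiniteMeasure ν := by
    constructor; rw [hvolu]; exact ENNReal.ofReal_lt_top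
  have hvc : Continuous v :=
    continuous_iff_continuousAt.2 fun t => (hv' t).differentiableAt.continuousAt
  set I := ∫ t in Ioo (-ℓ) ℓ, D t with hI
  have hInn : 0 ≤ I := integral_nonneg hDnn
  set S := Real.sqrt (2 * ℓ * I) with hS
  have hSnn : 0 ≤ S := Real.sqrt_nonneg _
  have hS2 : S ^ 2 = 2 * ℓ * I := Real.sq_sqrt (by positivity)
  -- v' is integrable on Ioo
  have hv'sq : Integrable (fun t => v' t ^ 2) ν :=
    hD.mono' (hv'm.pow 2) (Eventually.of_forall fun t => by
      simpa [abs_of_nonneg (sq_nonneg (v' t))] using hDbd t)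
  have hv'int : Integrable v' ν := by
    refine (hD.add (integrable_const 1)).div_const 2 |>.mono' hv'm
      (Eventually.of_forall fun t => ?_)
    have h1 : |v' t| ≤ (v' t ^ 2 + 1) / 2 := by nlinarith [sq_nonneg (|v' t| - 1), sq_abs (v' t)]
    have h2 := hDbd t
    simp only [Real.norm_eq_abs]
    calc |v' t| ≤ (v' t ^ 2 + 1) / 2 := h1
      _ ≤ (D t + 1) / 2 := by linarith
  -- L¹ bound on v'
  have hL1 : ∫ t in Ioo (-ℓ) ℓ, |v' t| ≤ S := by
    refine (L1_le_sqrt_L2 hℓ hv'sq).trans ?_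
    rw [hS]
    apply Real.sqrt_le_sqrt
    have : ∫ t in Ioo (-ℓ) ℓ, v' t ^ 2 ≤ I :=
      integral_mono_of_nonneg (Eventually.of_forall fun t => sq_nonneg _) hD
        (Eventually.of_forall hDbd)
    nlinarith
  -- FTC bound: for a b ∈ Ioo, |v a - v b| ≤ S
  have hdiff : ∀ a ∈ Ioo (-ℓ) ℓ, ∀ b ∈ Ioo (-ℓ) ℓ, |v a - v b| ≤ S := by
    intro a ha b hb
    have hsub : uIcc b a ⊆ Ioo (-ℓ) ℓ := (Set.ordConnected_Ioo).uIcc_subset hb ha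
    have hii : IntervalIntegrable v' volume b a := by
      rw [intervalIntegrable_iff]
      have hon : IntegrableOn v' (Ioo (-ℓ) ℓ) volume := hv'int
      exact hon.mono_set ((Set.uIoc_subset_uIcc).trans hsub)
    have hftc : ∫ t in b..a, v' t = v a - v b :=
      intervalIntegral.integral_eq_sub_of_hasDerivAt (fun t _ => hv' t) hii
    rw [← hftc]
    calc |∫ t in b..a, v' t| ≤ ∫ t in Set.uIoc b a, |v' t| :=
          by simpa [Real.norm_eq_abs] using
            (intervalIntegral.norm_integral_le_integral_norm_uIoc (f := v') (a := b) (b := a)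
              (μ := volume))
      _ ≤ ∫ t in Ioo (-ℓ) ℓ, |v' t| := by
          apply setIntegral_mono_set hv'int.abs
            (Eventually.of_forall fun t => abs_nonneg _)
          exact Eventually.of_forall ((Set.uIoc_subset_uIcc).trans hsub)
      _ ≤ S := hL1
  -- v integrable
  have hvint : Integrable v ν := by
    refine (hv2.add (integrable_const 1)).div_const 2 |>.mono'
      (hvc.aestronglyMeasurable) (Eventually.of_forall fun t => ?_)
    simp only [Real.norm_eq_abs]
    show |v t| ≤ (v t ^ 2 + 1) / 2
    nlinarith [sq_nonneg (|v t| - 1), sq_abs (v t)]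
  set ub := (1/(2*ℓ)) * ∫ t in Ioo (-ℓ) ℓ, v t with hub
  -- deviation bound
  have hdev : ∀ a ∈ Ioo (-ℓ) ℓ, |v a - ub| ≤ S := by
    intro a ha
    have hkey : v a - ub = (1/(2*ℓ)) * ∫ t in Ioo (-ℓ) ℓ, (v a - v t) := by
      rw [integral_sub (integrable_const (v a)) hvint, integral_const]
      rw [measureReal_def, hvolr, smul_eq_mul, hub]
      field_simp
      ring
    have habs : |∫ t in Ioo (-ℓ) ℓ, (v a - v t)| ≤ 2 * ℓ * S := by
      have h1 : |∫ t in Ioo (-ℓ) ℓ, (v a - v t)| ≤ ∫ t in Ioo (-ℓ) ℓ, |v a - v t| := by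
        simpa [Real.norm_eq_abs] using
          norm_integral_le_integral_norm (μ := ν) (f := fun t => v a - v t)
      refine h1.trans ?_
      have h2 : ∫ t in Ioo (-ℓ) ℓ, |v a - v t| ≤ ∫ _t in Ioo (-ℓ) ℓ, S := by
        refine integral_mono_of_nonneg (Eventually.of_forall fun t => abs_nonneg _)
          (integrable_const S) ?_
        filter_upwards [ae_restrict_mem hmeas] with t ht
        exact hdiff a ha t ht
      refine h2.trans_eq ?_
      rw [integral_const, measureReal_def, hvolr, smul_eq_mul]
    rw [hkey, abs_mul, abs_of_nonneg (by positivity : (0:ℝ) ≤ 1/(2*ℓ))]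
    calc 1/(2*ℓ) * |∫ t in Ioo (-ℓ) ℓ, (v a - v t)| ≤ 1/(2*ℓ) * (2 * ℓ * S) := by
          apply mul_le_mul_of_nonneg_left habs (by positivity)
      _ = S := by field_simp
  -- integrability of f and f*v
  have hfint : Integrable f ν :=
    (integrable_const Mf).mono' hfm.aestronglyMeasurable
      (Eventually.of_forall fun t => by simpa [Real.norm_eq_abs] using hfb t)
  have hfvint : Integrable (fun t => f t * v t) ν := by
    refine (hvint.abs.const_mul Mf).mono'
      ((hfm.mul hvc.measurable).aestronglyMeasurable)
      (Eventually.of_forall fun t => ?_)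
    simp only [Real.norm_eq_abs, abs_mul]
    exact mul_le_mul_of_nonneg_right (hfb t) (abs_nonneg _)
  -- rewrite the difference
  have hA : (1/(2*ℓ)) * (∫ t in Ioo (-ℓ) ℓ, f t * v t)
      - ((1/(2*ℓ)) * ∫ t in Ioo (-ℓ) ℓ, f t) * ub
      = (1/(2*ℓ)) * ∫ t in Ioo (-ℓ) ℓ, f t * (v t - ub) := by
    have : ∀ t, f t * (v t - ub) = f t * v t - f t * ub := fun t => by ring
    simp_rw [this]
    rw [integral_sub hfvint (hfint.mul_const ub), integral_mul_const]
    ring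
  have hAbound : |(1/(2*ℓ)) * ∫ t in Ioo (-ℓ) ℓ, f t * (v t - ub)| ≤ Mf * S := by
    rw [abs_mul, abs_of_nonneg (by positivity : (0:ℝ) ≤ 1/(2*ℓ))]
    have h1 : |∫ t in Ioo (-ℓ) ℓ, f t * (v t - ub)| ≤ ∫ t in Ioo (-ℓ) ℓ, |f t| * |v t - ub| := by
      simpa [Real.norm_eq_abs, abs_mul] using
        norm_integral_le_integral_norm (μ := ν) (f := fun t => f t * (v t - ub))
    have h2 : ∫ t in Ioo (-ℓ) ℓ, |f t| * |v t - ub| ≤ ∫ _t in Ioo (-ℓ) ℓ, Mf * S := by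
      refine integral_mono_of_nonneg
        (Eventually.of_forall fun t => mul_nonneg (abs_nonneg _) (abs_nonneg _))
        (integrable_const _) ?_
      filter_upwards [ae_restrict_mem hmeas] with t ht
      exact mul_le_mul (hfb t) (hdev t ht) (abs_nonneg _) hMf
    have h3 : ∫ _t in Ioo (-ℓ) ℓ, Mf * S = 2 * ℓ * (Mf * S) := by
      rw [integral_const, measureReal_def, hvolr, smul_eq_mul]
    calc 1/(2*ℓ) * |∫ t in Ioo (-ℓ) ℓ, f t * (v t - ub)|
        ≤ 1/(2*ℓ) * (2 * ℓ * (Mf * S)) := by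
          apply mul_le_mul_of_nonneg_left ((h1.trans h2).trans_eq h3) (by positivity)
      _ = Mf * S := by field_simp
  rw [hA]
  calc ((1/(2*ℓ)) * ∫ t in Ioo (-ℓ) ℓ, f t * (v t - ub)) ^ 2
      = |(1/(2*ℓ)) * ∫ t in Ioo (-ℓ) ℓ, f t * (v t - ub)| ^ 2 := (sq_abs _).symm
    _ ≤ (Mf * S) ^ 2 := by
        apply pow_le_pow_left₀ (abs_nonneg _) hAbound
    _ = 2 * ℓ * Mf ^ 2 * I := by rw [mul_pow, hS2]; ring


/-- Product-averaging estimate, `p = ∞` case: the `L²(ℝ²)` norm of the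
difference between the vertical average of a product `f u` and the product of
the vertical averages is bounded by `C ℓ ‖f‖_{L^∞}` times the averaged `L²`
norm of the full gradient of `u`. -/
theorem avg_product_estimate_Linfty :
    ∃ C : ℝ, 0 < C ∧
      ∀ (ℓ : ℝ), 0 < ℓ →
      ∀ (f : (ℝ × ℝ) × ℝ → ℝ) (u : (ℝ × ℝ) × ℝ → ℝ) (Mf : ℝ),
        Measurable f →
        (∀ p, |f p| ≤ Mf) →
        Differentiable ℝ u →
        Integrable (fun p => (u p) ^ 2)
          (volume.restrict ((univ : Set (ℝ × ℝ)) ×ˢ Ioo (-ℓ) ℓ)) →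
        Integrable (fun p => ‖fderiv ℝ u p‖ ^ 2)
          (volume.restrict ((univ : Set (ℝ × ℝ)) ×ˢ Ioo (-ℓ) ℓ)) →
        (∫ xh : ℝ × ℝ,
            ((1 / (2 * ℓ)) * (∫ x₃ in Ioo (-ℓ) ℓ, f (xh, x₃) * u (xh, x₃))
              - ((1 / (2 * ℓ)) * ∫ x₃ in Ioo (-ℓ) ℓ, f (xh, x₃))
                * ((1 / (2 * ℓ)) * ∫ x₃ in Ioo (-ℓ) ℓ, u (xh, x₃))) ^ 2)
            ^ ((1 : ℝ) / 2)
          ≤ C * ℓ * Mf *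
            ((1 / (2 * ℓ)) * ∫ x₃ in Ioo (-ℓ) ℓ, ∫ xh : ℝ × ℝ,
              ‖fderiv ℝ u (xh, x₃)‖ ^ 2) ^ ((1 : ℝ) / 2) := by
  refine ⟨2, by norm_num, ?_⟩
  intro ℓ hℓ f u Mf hfm hfb hud hu2 hDu2
  have hMf : 0 ≤ Mf := (abs_nonneg _).trans (hfb ((0, 0), 0))
  set ν := volume.restrict (Ioo (-ℓ : ℝ) ℓ) with hν
  have hrw : volume.restrict ((univ : Set (ℝ × ℝ)) ×ˢ Ioo (-ℓ) ℓ)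
      = (volume : Measure (ℝ × ℝ)).prod ν := by
    rw [hν, Measure.volume_eq_prod, ← Measure.prod_restrict, Measure.restrict_univ]
  rw [hrw] at hu2 hDu2
  -- a.e. slice integrability
  have hu2ae : ∀ᵐ xh : ℝ × ℝ, Integrable (fun t => u (xh, t) ^ 2) ν :=
    hu2.prod_right_ae
  have hDae : ∀ᵐ xh : ℝ × ℝ, Integrable (fun t => ‖fderiv ℝ u (xh, t)‖ ^ 2) ν :=
    hDu2.prod_right_ae
  have hgint : Integrable (fun xh : ℝ × ℝ => ∫ t, ‖fderiv ℝ u (xh, t)‖ ^ 2 ∂ν) volume :=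
    hDu2.integral_prod_left
  -- pointwise (in xh) bound via the slice lemma
  have hkey : ∀ᵐ xh : ℝ × ℝ,
      ((1 / (2 * ℓ)) * (∫ x₃ in Ioo (-ℓ) ℓ, f (xh, x₃) * u (xh, x₃))
        - ((1 / (2 * ℓ)) * ∫ x₃ in Ioo (-ℓ) ℓ, f (xh, x₃))
          * ((1 / (2 * ℓ)) * ∫ x₃ in Ioo (-ℓ) ℓ, u (xh, x₃))) ^ 2
      ≤ 2 * ℓ * Mf ^ 2 * ∫ t, ‖fderiv ℝ u (xh, t)‖ ^ 2 ∂ν := by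
    filter_upwards [hu2ae, hDae] with xh h2 hDs
    have hv' : ∀ t : ℝ, HasDerivAt (fun s => u (xh, s))
        (fderiv ℝ u (xh, t) ((0 : ℝ × ℝ), (1 : ℝ))) t := by
      intro t
      have h1 : HasDerivAt (fun s : ℝ => ((xh : ℝ × ℝ), s)) ((0 : ℝ × ℝ), (1 : ℝ)) t :=
        (hasDerivAt_const t xh).prodMk (hasDerivAt_id t)
      exact ((hud (xh, t)).hasFDerivAt).comp_hasDerivAt t h1
    have hnorm1 : ‖((0 : ℝ × ℝ), (1 : ℝ))‖ = 1 := by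
      simp [Prod.norm_def]
    have hDbd : ∀ t : ℝ, (fderiv ℝ u (xh, t) ((0 : ℝ × ℝ), (1 : ℝ))) ^ 2
        ≤ ‖fderiv ℝ u (xh, t)‖ ^ 2 := by
      intro t
      have h1 : |fderiv ℝ u (xh, t) ((0 : ℝ × ℝ), (1 : ℝ))| ≤ ‖fderiv ℝ u (xh, t)‖ := by
        have := (fderiv ℝ u (xh, t)).le_opNorm ((0 : ℝ × ℝ), (1 : ℝ))
        rwa [hnorm1, mul_one, Real.norm_eq_abs] at this
      calc (fderiv ℝ u (xh, t) ((0 : ℝ × ℝ), (1 : ℝ))) ^ 2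
          = |fderiv ℝ u (xh, t) ((0 : ℝ × ℝ), (1 : ℝ))| ^ 2 := (sq_abs _).symm
        _ ≤ ‖fderiv ℝ u (xh, t)‖ ^ 2 := by
            apply pow_le_pow_left₀ (abs_nonneg _) h1
    have hv'm : AEStronglyMeasurable
        (fun t => fderiv ℝ u (xh, t) ((0 : ℝ × ℝ), (1 : ℝ))) ν := by
      have : Measurable (fun t : ℝ => fderiv ℝ u (xh, t)) :=
        (measurable_fderiv ℝ u).comp measurable_prodMk_left
      exact (this.apply_continuousLinearMap _).aestronglyMeasurable
    exact slice_bound hℓ (fun t => f (xh, t)) (fun t => u (xh, t))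
      (fun t => fderiv ℝ u (xh, t) ((0 : ℝ × ℝ), (1 : ℝ)))
      (fun t => ‖fderiv ℝ u (xh, t)‖ ^ 2) Mf hMf
      (hfm.comp measurable_prodMk_left) (fun t => hfb _) hv' hv'm
      (fun t => sq_nonneg _) hDbd h2 hDs
  -- integrate the bound
  set J := ∫ x₃ in Ioo (-ℓ) ℓ, ∫ xh : ℝ × ℝ, ‖fderiv ℝ u (xh, x₃)‖ ^ 2 with hJ
  have hJnn : 0 ≤ J :=
    integral_nonneg fun t => integral_nonneg fun xh => sq_nonneg _
  have hswap : ∫ xh : ℝ × ℝ, ∫ t, ‖fderiv ℝ u (xh, t)‖ ^ 2 ∂ν = J := by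
    rw [hJ, hν]
    exact integral_integral_swap (f := fun xh t => ‖fderiv ℝ u (xh, t)‖ ^ 2) hDu2
  have hmono : (∫ xh : ℝ × ℝ,
      ((1 / (2 * ℓ)) * (∫ x₃ in Ioo (-ℓ) ℓ, f (xh, x₃) * u (xh, x₃))
        - ((1 / (2 * ℓ)) * ∫ x₃ in Ioo (-ℓ) ℓ, f (xh, x₃))
          * ((1 / (2 * ℓ)) * ∫ x₃ in Ioo (-ℓ) ℓ, u (xh, x₃))) ^ 2)
      ≤ 2 * ℓ * Mf ^ 2 * J := by
    have h1 : (∫ xh : ℝ × ℝ,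
        ((1 / (2 * ℓ)) * (∫ x₃ in Ioo (-ℓ) ℓ, f (xh, x₃) * u (xh, x₃))
          - ((1 / (2 * ℓ)) * ∫ x₃ in Ioo (-ℓ) ℓ, f (xh, x₃))
            * ((1 / (2 * ℓ)) * ∫ x₃ in Ioo (-ℓ) ℓ, u (xh, x₃))) ^ 2)
        ≤ ∫ xh : ℝ × ℝ, 2 * ℓ * Mf ^ 2 * ∫ t, ‖fderiv ℝ u (xh, t)‖ ^ 2 ∂ν :=
      integral_mono_of_nonneg (Filter.Eventually.of_forall fun xh => sq_nonneg _)
        (hgint.const_mul _) hkey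
    rw [integral_const_mul, hswap] at h1
    exact h1
  -- conclude with square roots
  rw [← Real.sqrt_eq_rpow, ← Real.sqrt_eq_rpow]
  have hrhs : (2 : ℝ) * ℓ * Mf * Real.sqrt ((1 / (2 * ℓ)) * J)
      = Real.sqrt (2 * ℓ * Mf ^ 2 * J) := by
    rw [show (2 : ℝ) * ℓ * Mf ^ 2 * J = (2 * ℓ * Mf) ^ 2 * ((1 / (2 * ℓ)) * J) by
      field_simp]
    rw [Real.sqrt_mul (sq_nonneg _), Real.sqrt_sq (by positivity)]
  rw [hrhs]
  exact Real.sqrt_le_sqrt hmono
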